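/- For every non-negative integer n and non-negative integer r, the value sum_{k=0}^{n} (-1)^k * k!/(k+1) * S_r(n+r, k+r) is a polynomial in r of degree n with rational coefficients, namely the Bernoulli polynomial B_n(r); in particular for r = 0 it reduces to the Bernoulli number B_n. -/

import Mathlib

open Finset Real

/-- Stirling numbers of the second kind `S(n, k)`. -/
def stirling2 : ℕ → ℕ → ℕ
  | 0, 0 => 1
  | 0, _ + 1 => 0
  | _ + 1, 0 => 0
  | n + 1, k + 1 => (k + 1) * stirling2 n (k + 1) + stirling2 n k

/-- The `r`-Stirling numbers of the second kind `S_r(n, k)` of Broder: the number of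
partitions of `{1, …, n}` into `k` non-empty subsets such that `1, …, r` lie in
distinct subsets (with the convention `S_r(n, k) = 0` for `n < r`). -/
def rStirling (r : ℕ) : ℕ → ℕ → ℕ
  | 0, k => if r = 0 ∧ k = 0 then 1 else 0
  | n + 1, k =>
    if n + 1 < r then 0
    else if n + 1 = r then (if k = r then 1 else 0)
    else
      match k with
      | 0 => 0
      | k + 1 => (k + 1) * rStirling r n (k + 1) + rStirling r n k

/-!
Both `(n, k) ↦ S_r(n + r, k + r)` and `(n, k) ↦ ∑ᵢ C(n, i) rⁿ⁻ⁱ S(i, k)` satisfy the triangular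
recurrence of the `r`-Stirling numbers, so they agree; for `r = 1` this is
`S(n + 1, k + 1) = ∑ᵢ C(n, i) S(i, k)`. With that identity, and the telescoping of
`(-1)ᵏ k! S(n, k)`, the numbers `∑ₖ (-1)ᵏ k!/(k + 1) S(n, k)` satisfy the recursion
`∑_{m<n} C(n, m) Bₘ = [n = 1]` that determines the Bernoulli numbers. Summing them against the
binomial expansion of `S_r(n + r, k + r)` gives `∑ᵢ C(n, i) Bᵢ rⁿ⁻ⁱ = Bₙ(r)`.
-/

open Nat

theorem rStirling_eq_zero_of_lt {r k : ℕ} (hk : k < r) (n : ℕ) : rStirling r n k = 0 := by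
  induction n generalizing k with
  | zero => rw [rStirling, if_neg (by omega)]
  | succ n ih =>
    unfold rStirling
    split_ifs
    · rfl
    · omega
    · rfl
    · cases k with
      | zero => rfl
      | succ j => simp [ih hk, ih (Nat.lt_of_succ_lt hk)]

theorem rStirling_self (r k : ℕ) : rStirling r r k = if k = r then 1 else 0 := by
  cases r <;> simp [rStirling]

theorem rStirling_succ_zero {r n : ℕ} (h : r ≤ n) : rStirling r (n + 1) 0 = 0 := by
  rw [rStirling, if_neg (by omega), if_neg (by omega)]

theorem rStirling_succ_succ {r n : ℕ} (h : r ≤ n) (k : ℕ) :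
    rStirling r (n + 1) (k + 1) = (k + 1) * rStirling r n (k + 1) + rStirling r n k := by
  rw [rStirling, if_neg (by omega), if_neg (by omega)]

theorem sum_range_choose_succ_mul_pow_mul (r n : ℕ) (s : ℕ → ℕ) :
    ∑ i ∈ range (n + 2), (n + 1).choose i * r ^ (n + 1 - i) * s i =
      r * ∑ i ∈ range (n + 1), n.choose i * r ^ (n - i) * s i +
        ∑ i ∈ range (n + 1), n.choose i * r ^ (n - i) * s (i + 1) := by
  have := sum_choose_succ_mul (R := ℕ) (fun i j => r ^ j * s i) n
  simp only [Nat.cast_id, ← mul_assoc] at this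
  rw [mul_sum, this]
  congr 1
  refine sum_congr rfl fun i hi => ?_
  rw [Nat.sub_add_comm (mem_range_succ_iff.mp hi), pow_succ]
  ring

structure IsRStirlingTable (r : ℕ) (f : ℕ → ℕ → ℕ) : Prop where
  zero_left : ∀ k, f 0 k = if k = 0 then 1 else 0
  succ_zero : ∀ n, f (n + 1) 0 = r * f n 0
  succ_succ : ∀ n k, f (n + 1) (k + 1) = (k + 1 + r) * f n (k + 1) + f n k

theorem IsRStirlingTable.unique {r : ℕ} {f g : ℕ → ℕ → ℕ} (hf : IsRStirlingTable r f)
    (hg : IsRStirlingTable r g) : f = g := by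
  ext n k
  induction n generalizing k with
  | zero => rw [hf.zero_left, hg.zero_left]
  | succ n ih =>
    cases k with
    | zero => rw [hf.succ_zero, hg.succ_zero, ih]
    | succ k => rw [hf.succ_succ, hg.succ_succ, ih, ih]

theorem isRStirlingTable_rStirling (r : ℕ) :
    IsRStirlingTable r fun n k => rStirling r (n + r) (k + r) where
  zero_left k := by simp [rStirling_self]
  succ_zero n := by
    cases r with
    | zero => simpa using rStirling_succ_zero (Nat.zero_le n)
    | succ r =>
      rw [show n + 1 + (r + 1) = n + (r + 1) + 1 by ring, zero_add,
        rStirling_succ_succ (by omega), rStirling_eq_zero_of_lt r.lt_succ_self, add_zero]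
  succ_succ n k := by
    rw [show n + 1 + r = n + r + 1 by ring, show k + 1 + r = k + r + 1 by ring,
      rStirling_succ_succ (by omega)]

theorem isRStirlingTable_sum_choose (r : ℕ) :
    IsRStirlingTable r fun n k =>
      ∑ i ∈ range (n + 1), n.choose i * r ^ (n - i) * stirlingSecond i k where
  zero_left k := by cases k <;> simp
  succ_zero n := by
    simp [sum_range_choose_succ_mul_pow_mul r n (stirlingSecond · 0)]
  succ_succ n k := by
    simp only [sum_range_choose_succ_mul_pow_mul r n (stirlingSecond · (k + 1)),
      stirlingSecond_succ_succ, mul_add, sum_add_distrib, mul_left_comm _ (k + 1), ← mul_sum]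
    ring

theorem isRStirlingTable_stirlingSecond :
    IsRStirlingTable 1 fun n k => stirlingSecond (n + 1) (k + 1) where
  zero_left k := by cases k <;> simp [stirlingSecond_succ_succ]
  succ_zero n := by simp [stirlingSecond_succ_succ]
  succ_succ n k := by rw [stirlingSecond_succ_succ (n + 1)]

theorem rStirling_add_eq_sum_choose (r n k : ℕ) :
    rStirling r (n + r) (k + r) =
      ∑ i ∈ range (n + 1), n.choose i * r ^ (n - i) * stirlingSecond i k :=
  congrFun₂ ((isRStirlingTable_rStirling r).unique (isRStirlingTable_sum_choose r)) n k

theorem stirlingSecond_succ_succ_eq_sum_choose (n k : ℕ) :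
    stirlingSecond (n + 1) (k + 1) = ∑ i ∈ range (n + 1), n.choose i * stirlingSecond i k := by
  simpa using
    congrFun₂ (isRStirlingTable_stirlingSecond.unique (isRStirlingTable_sum_choose 1)) n k

theorem sum_range_mul_stirlingSecond_of_lt {R : Type*} [Semiring R] (g : ℕ → R) {n N : ℕ}
    (h : n < N) :
    ∑ k ∈ range N, g k * stirlingSecond n k =
      ∑ k ∈ range (n + 1), g k * stirlingSecond n k := by
  refine (sum_subset (range_subset_range.mpr h) fun k _ hk => ?_).symm
  rw [stirlingSecond_eq_zero_of_lt (by simpa using hk), Nat.cast_zero, mul_zero]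

theorem sum_range_neg_one_pow_mul_factorial_mul_stirlingSecond {R : Type*} [CommRing R]
    (n : ℕ) :
    ∑ k ∈ range (n + 2), (-1 : R) ^ k * k ! * stirlingSecond (n + 1) (k + 1) =
      stirlingSecond n 0 := by
  set a : ℕ → R := fun k => (-1) ^ k * k ! * stirlingSecond n k
  have htelescope :
      ∀ k, (-1 : R) ^ k * k ! * stirlingSecond (n + 1) (k + 1) = a k - a (k + 1) := by
    intro k
    simp only [a, stirlingSecond_succ_succ, factorial_succ]
    push_cast
    ring
  rw [sum_congr rfl fun k _ => htelescope k, sum_range_sub']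
  simp [a, stirlingSecond_eq_zero_of_lt (show n < n + 2 by omega)]

theorem eq_bernoulli_of_sum_range_choose {x : ℕ → ℚ}
    (h : ∀ n, ∑ k ∈ range n, (n.choose k : ℚ) * x k = if n = 1 then 1 else 0) :
    x = bernoulli := by
  funext n
  induction n using Nat.strong_induction_on with
  | _ n ih =>
    have hx := h (n + 1)
    rw [← sum_bernoulli, sum_range_succ, sum_range_succ,
      sum_congr rfl fun m hm => by rw [ih m (mem_range.mp hm)]] at hx
    have hchoose : ((n + 1).choose n : ℚ) ≠ 0 := by
      rw [Nat.choose_succ_self_right]; positivity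
    exact mul_left_cancel₀ hchoose (add_left_cancel hx)

def stirlingBernoulli (n : ℕ) : ℚ :=
  ∑ k ∈ range (n + 1), (-1) ^ k * k ! / (k + 1) * stirlingSecond n k

theorem sum_range_choose_mul_stirlingBernoulli (n : ℕ) :
    ∑ m ∈ range (n + 2), ((n + 1).choose m : ℚ) * stirlingBernoulli m =
      stirlingSecond n 0 + stirlingBernoulli (n + 1) := by
  set c : ℕ → ℚ := fun k => (-1) ^ k * k ! / (k + 1)
  have hextend : ∀ m ∈ range (n + 2),
      stirlingBernoulli m = ∑ k ∈ range (n + 2), c k * stirlingSecond m k := fun m hm =>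
    (sum_range_mul_stirlingSecond_of_lt c (mem_range.mp hm)).symm
  have hsplit : ∀ k, c k * stirlingSecond (n + 2) (k + 1) =
      (-1) ^ k * k ! * stirlingSecond (n + 1) (k + 1) + c k * stirlingSecond (n + 1) k := by
    intro k
    simp only [c, stirlingSecond_succ_succ (n + 1)]
    push_cast
    field_simp
  calc ∑ m ∈ range (n + 2), ((n + 1).choose m : ℚ) * stirlingBernoulli m
      = ∑ k ∈ range (n + 2), c k * stirlingSecond (n + 2) (k + 1) := by
        rw [sum_congr rfl fun m hm => by rw [hextend m hm, mul_sum]]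
        rw [sum_comm]
        refine sum_congr rfl fun k _ => ?_
        rw [stirlingSecond_succ_succ_eq_sum_choose, Nat.cast_sum, mul_sum]
        push_cast
        exact sum_congr rfl fun m _ => by ring
    _ = stirlingSecond n 0 + stirlingBernoulli (n + 1) := by
        rw [sum_congr rfl fun k _ => hsplit k, sum_add_distrib,
          sum_range_neg_one_pow_mul_factorial_mul_stirlingSecond]
        rfl

theorem stirlingBernoulli_eq_bernoulli : stirlingBernoulli = bernoulli := by
  refine eq_bernoulli_of_sum_range_choose fun n => ?_
  cases n with
  | zero => simp
  | succ n =>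
    have h := sum_range_choose_mul_stirlingBernoulli n
    rw [sum_range_succ, choose_self, cast_one, one_mul, add_left_inj] at h
    rw [h]
    cases n <;> simp

namespace Polynomial

theorem degree_bernoulli (n : ℕ) : (bernoulli n).degree = n := by
  refine degree_eq_of_le_of_coeff_ne_zero ?_ (by simp [coeff_bernoulli])
  rw [degree_le_iff_coeff_zero]
  intro m hm
  rw [coeff_bernoulli, if_neg (by exact_mod_cast hm.not_ge)]

theorem eval_bernoulli (n : ℕ) (x : ℚ) :
    (bernoulli n).eval x =
      ∑ i ∈ range (n + 1), n.choose i * x ^ (n - i) * _root_.bernoulli i := by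
  simp only [bernoulli, eval_finsetSum, eval_monomial]
  exact sum_congr rfl fun i _ => by ring

end Polynomial

theorem sum_rStirling_eq_eval_bernoulli (n r : ℕ) :
    ∑ k ∈ range (n + 1), (-1 : ℚ) ^ k * k ! / (k + 1) * rStirling r (n + r) (k + r) =
      (Polynomial.bernoulli n).eval (r : ℚ) := by
  simp only [rStirling_add_eq_sum_choose, Nat.cast_sum, Nat.cast_mul, Nat.cast_pow, mul_sum]
  rw [sum_comm, Polynomial.eval_bernoulli, ← stirlingBernoulli_eq_bernoulli]
  refine sum_congr rfl fun i hi => ?_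
  rw [stirlingBernoulli, ← sum_range_mul_stirlingSecond_of_lt
    (fun k : ℕ => (-1 : ℚ) ^ k * k ! / (k + 1)) (mem_range.mp hi), mul_sum]
  exact sum_congr rfl fun k _ => by ring

theorem sum_rStirling_is_bernoulli_poly (n : ℕ) :
    (Polynomial.bernoulli n).degree = n ∧
      (∀ r : ℕ,
        (∑ k ∈ Finset.range (n + 1),
            (-1 : ℚ) ^ k * (Nat.factorial k : ℚ) / (k + 1) * rStirling r (n + r) (k + r)) =
          (Polynomial.bernoulli n).eval (r : ℚ)) ∧
      (∑ k ∈ Finset.range (n + 1),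
          (-1 : ℚ) ^ k * (Nat.factorial k : ℚ) / (k + 1) * rStirling 0 n k) = bernoulli n :=
  ⟨Polynomial.degree_bernoulli n, sum_rStirling_eq_eval_bernoulli n, by
    simpa using sum_rStirling_eq_eval_bernoulli n 0⟩
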